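/- arXiv:1501.06661 — 8 statements merged into one kernel-verified Lean document; each statement's English description precedes it below -/
import Mathlib

section
/- Let n ≥ 3 and k ≥ 2 with n > k, and let E be an Euler square of index (n,k), i.e., an n×n array of k-tuples (a_{ij1},…,a_{ijk}) with entries in {0,…,n−1} such that a_{ipr} ≠ a_{iqr} and a_{pjr} ≠ a_{qjr} for p ≠ q, and (a_{ijr}+1)(a_{ijs}+1) ≠ (a_{pqr}+1)(a_{pqs}+1) whenever i ≠ p and j ≠ q. Define the binary matrix Φ of size nk × n² whose column indexed by the cell (i,j) has a 1 exactly at the positions (l−1)n + a_{ijl} + 1 for l = 1,…,k. Then for any two distinct columns of Φ, the number of positions at which both columns equal 1 is at most 1. -/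
open scoped Classical

/-- Two distinct columns of the binary matrix built from an Euler square of
index (n,k) share a 1 in at most one position. -/
theorem euler_square_matrix_overlap_le_one
    (n k : ℕ) (hn : 3 ≤ n) (hk : 2 ≤ k) (hkn : k < n)
    (a : Fin n → Fin n → Fin k → Fin n)
    (hrow : ∀ (i p q : Fin n) (r : Fin k), p ≠ q → a i p r ≠ a i q r)
    (hcol : ∀ (p q j : Fin n) (r : Fin k), p ≠ q → a p j r ≠ a q j r)
    (horth : ∀ (i j p q : Fin n) (r s : Fin k), i ≠ p → j ≠ q → r ≠ s →
      ((a i j r : ℕ) + 1) * ((a i j s : ℕ) + 1) ≠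
        ((a p q r : ℕ) + 1) * ((a p q s : ℕ) + 1))
    (Φ : Matrix (Fin (n * k)) (Fin n × Fin n) ℝ)
    (hΦ : ∀ (i : Fin (n * k)) (c : Fin n × Fin n),
      Φ i c = if ∃ l : Fin k, (i : ℕ) = (l : ℕ) * n + (a c.1 c.2 l : ℕ) then 1 else 0)
    (c d : Fin n × Fin n) (hcd : c ≠ d) :
    (Finset.univ.filter fun i : Fin (n * k) => Φ i c = 1 ∧ Φ i d = 1).card ≤ 1 := by
  have hn0 : 0 < n := by omega
  have ldiv : ∀ (l : Fin k) (x : Fin n), ((l : ℕ) * n + (x : ℕ)) / n = l := by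
    intro l x
    rw [mul_comm, Nat.mul_add_div hn0, Nat.div_eq_of_lt x.isLt, add_zero]
  have extract : ∀ (i : Fin (n * k)) (e : Fin n × Fin n), Φ i e = 1 →
      ∃ l : Fin k, (i : ℕ) = (l : ℕ) * n + (a e.1 e.2 l : ℕ) := by
    intro i e h
    rw [hΦ] at h
    by_contra hcon
    rw [if_neg hcon] at h
    norm_num at h
  rw [Finset.card_le_one]
  intro i hi j hj
  rw [Finset.mem_filter] at hi hj
  obtain ⟨l1, hl1⟩ := extract i c hi.2.1
  obtain ⟨l2, hl2⟩ := extract i d hi.2.2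
  obtain ⟨m1, hm1⟩ := extract j c hj.2.1
  obtain ⟨m2, hm2⟩ := extract j d hj.2.2
  have e12 : l1 = l2 := Fin.ext (by
    rw [← ldiv l1 (a c.1 c.2 l1), ← hl1, hl2, ldiv])
  have e34 : m1 = m2 := Fin.ext (by
    rw [← ldiv m1 (a c.1 c.2 m1), ← hm1, hm2, ldiv])
  rw [← e12] at hl2
  rw [← e34] at hm2
  have hac : a c.1 c.2 l1 = a d.1 d.2 l1 :=
    Fin.ext (Nat.add_left_cancel (hl1.symm.trans hl2))
  have had : a c.1 c.2 m1 = a d.1 d.2 m1 :=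
    Fin.ext (Nat.add_left_cancel (hm1.symm.trans hm2))
  obtain ⟨ci, cj⟩ := c
  obtain ⟨di, dj⟩ := d
  have lm : l1 = m1 := by
    by_contra hlm
    by_cases hii : ci = di
    · have hjj : cj ≠ dj := by
        intro hjj
        exact hcd (by rw [hii, hjj])
      exact hrow ci cj dj l1 hjj (by rw [hac, hii])
    · by_cases hjj : cj = dj
      · exact hcol ci di cj l1 hii (by rw [hac, hjj])
      · exact horth ci cj di dj l1 m1 hii hjj hlm (by rw [hac, had])
  rw [lm] at hl1
  exact Fin.ext (hl1.trans hm1.symm)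
end

section
/- Let Φ be an m × M matrix with unit ℓ²-norm columns and coherence μ. Then for every integer k' ≥ 1 and every k'-sparse vector x ∈ ℝ^M, one has (1 − (k'−1)μ)‖x‖₂² ≤ ‖Φx‖₂² ≤ (1 + (k'−1)μ)‖x‖₂². That is, Φ satisfies the Restricted Isometry Property of order k' with constant δ_{k'} = (k'−1)μ. -/
open scoped Classical

/-- A matrix with unit-norm columns and coherence μ satisfies the RIP of
order k' with constant (k'−1)μ. -/
theorem rip_of_coherence
    (m M : ℕ) (Φ : Matrix (Fin m) (Fin M) ℝ) (μ : ℝ) (hμ0 : 0 ≤ μ)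
    (hunit : ∀ j, ∑ i, Φ i j ^ 2 = 1)
    (hμ : ∀ c d, c ≠ d → |∑ i, Φ i c * Φ i d| ≤ μ)
    (k' : ℕ) (hk' : 1 ≤ k')
    (x : Fin M → ℝ)
    (hx : (Finset.univ.filter fun j => x j ≠ 0).card ≤ k') :
    (1 - ((k' : ℝ) - 1) * μ) * ∑ j, x j ^ 2 ≤ ∑ i, (Φ.mulVec x i) ^ 2 ∧
    ∑ i, (Φ.mulVec x i) ^ 2 ≤ (1 + ((k' : ℝ) - 1) * μ) * ∑ j, x j ^ 2 := by
  classical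
  set S : Finset (Fin M) := Finset.univ.filter fun j => x j ≠ 0 with hS
  set G : Fin M → Fin M → ℝ := fun c d => ∑ i, Φ i c * Φ i d with hG
  set E : ℝ := ∑ j, x j ^ 2 with hE
  have hE_S : E = ∑ j ∈ S, x j ^ 2 := by
    rw [hE, Finset.sum_filter_of_ne]
    intro j _ h
    intro hxj
    exact h (by rw [hxj]; ring)
  have hmem : ∀ c : Fin M, c ∉ S → x c = 0 := by
    intro c hc
    by_contra h
    exact hc (by simp [hS, h])
  -- expand the quadratic form
  have hQ : ∑ i, (Φ.mulVec x i) ^ 2 = ∑ c, ∑ d, x c * x d * G c d := by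
    calc ∑ i, (Φ.mulVec x i) ^ 2
        = ∑ i, ∑ c, ∑ d, x c * x d * (Φ i c * Φ i d) := by
          refine Finset.sum_congr rfl fun i _ => ?_
          rw [Matrix.mulVec, dotProduct, sq, Finset.sum_mul_sum]
          exact Finset.sum_congr rfl fun c _ => Finset.sum_congr rfl fun d _ => by ring
      _ = ∑ c, ∑ i, ∑ d, x c * x d * (Φ i c * Φ i d) := Finset.sum_comm
      _ = ∑ c, ∑ d, ∑ i, x c * x d * (Φ i c * Φ i d) :=
          Finset.sum_congr rfl fun c _ => Finset.sum_comm
      _ = ∑ c, ∑ d, x c * x d * G c d := by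
          refine Finset.sum_congr rfl fun c _ => Finset.sum_congr rfl fun d _ => ?_
          rw [hG, Finset.mul_sum]
  -- restrict to the support
  have hQ_S : ∑ i, (Φ.mulVec x i) ^ 2 = ∑ c ∈ S, ∑ d ∈ S, x c * x d * G c d := by
    rw [hQ]
    rw [← Finset.sum_subset (S.subset_univ)
      (fun c _ hc => Finset.sum_eq_zero fun d _ => by rw [hmem c hc]; ring)]
    refine Finset.sum_congr rfl fun c _ => ?_
    rw [← Finset.sum_subset (S.subset_univ)
      (fun d _ hd => by rw [hmem d hd]; ring)]
  -- diagonal part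
  have hdiag : ∀ c, x c * x c * G c c = x c ^ 2 := by
    intro c
    have : G c c = 1 := by
      rw [hG]; simpa [sq] using hunit c
    rw [this]; ring
  -- split off diagonal
  have hsplit : ∑ c ∈ S, ∑ d ∈ S, x c * x d * G c d
      = E + ∑ c ∈ S, ∑ d ∈ S.erase c, x c * x d * G c d := by
    rw [hE_S]
    rw [← Finset.sum_add_distrib]
    refine Finset.sum_congr rfl fun c hc => ?_
    rw [← Finset.add_sum_erase _ _ hc, hdiag c]
  -- bound the off-diagonal part
  have hcard : (S.card : ℝ) ≤ (k' : ℝ) := by exact_mod_cast hx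
  have habs : |∑ c ∈ S, ∑ d ∈ S.erase c, x c * x d * G c d| ≤ ((k' : ℝ) - 1) * μ * E := by
    calc |∑ c ∈ S, ∑ d ∈ S.erase c, x c * x d * G c d|
        ≤ ∑ c ∈ S, |∑ d ∈ S.erase c, x c * x d * G c d| := Finset.abs_sum_le_sum_abs _ _
      _ ≤ ∑ c ∈ S, ∑ d ∈ S.erase c, |x c| * |x d| * μ := by
          refine Finset.sum_le_sum fun c _ => ?_
          refine (Finset.abs_sum_le_sum_abs _ _).trans (Finset.sum_le_sum fun d hd => ?_)
          rw [abs_mul, abs_mul]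
          exact mul_le_mul_of_nonneg_left (hμ c d (Ne.symm (Finset.ne_of_mem_erase hd)))
            (by positivity)
      _ = μ * (∑ c ∈ S, ∑ d ∈ S.erase c, |x c| * |x d|) := by
          rw [Finset.mul_sum]; refine Finset.sum_congr rfl fun c _ => ?_
          rw [Finset.mul_sum]; exact Finset.sum_congr rfl fun d _ => by ring
      _ ≤ μ * (((k' : ℝ) - 1) * E) := by
          refine mul_le_mul_of_nonneg_left ?_ hμ0
          have key : ∑ c ∈ S, ∑ d ∈ S.erase c, |x c| * |x d|
              = (∑ c ∈ S, |x c|) ^ 2 - E := by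
            rw [hE_S, sq, Finset.sum_mul_sum, ← Finset.sum_sub_distrib]
            refine Finset.sum_congr rfl fun c hc => ?_
            rw [← Finset.add_sum_erase _ (fun d => |x c| * |x d|) hc]
            rw [← abs_mul, ← sq, abs_sq]
            ring
          rw [key]
          have h1 : (∑ c ∈ S, |x c|) ^ 2 ≤ (S.card : ℝ) * E := by
            rw [hE_S]
            have := sq_sum_le_card_mul_sum_sq (s := S) (f := fun c => |x c|)
            simpa [sq_abs] using this
          have hE0 : 0 ≤ E := by rw [hE]; positivity
          nlinarith [mul_le_mul_of_nonneg_right hcard hE0]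
      _ = ((k' : ℝ) - 1) * μ * E := by ring
  have hEq : ∑ i, (Φ.mulVec x i) ^ 2 = E + ∑ c ∈ S, ∑ d ∈ S.erase c, x c * x d * G c d := by
    rw [hQ_S, hsplit]
  rw [hEq]
  rw [abs_le] at habs
  constructor <;> [nlinarith [habs.1]; nlinarith [habs.2]]
end

section
/- Let Φ be an nk × n² binary matrix in which each column has exactly k ones and any two distinct columns overlap in at most one position. Then the normalized matrix Φ₀ = (1/√k)Φ satisfies the RIP of order k' with constant δ_{k'} = (k'−1)/k for every k' < k+1; in particular δ_{k'} < 1 for k' ≤ k. -/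
open scoped Classical

/-- The normalized Euler-square matrix Φ₀ = (1/√k)Φ satisfies the RIP of
order k' with constant (k'−1)/k for every k' < k+1; in particular the
constant is < 1 for k' ≤ k. -/
theorem normalized_rip
    (n k : ℕ) (hk : 1 ≤ k)
    (Φ : Matrix (Fin (n * k)) (Fin (n * n)) ℝ)
    (hbin : ∀ i j, Φ i j = 0 ∨ Φ i j = 1)
    (hones : ∀ j, (Finset.univ.filter fun i => Φ i j = 1).card = k)
    (hoverlap : ∀ c d, c ≠ d →
      (Finset.univ.filter fun i => Φ i c = 1 ∧ Φ i d = 1).card ≤ 1)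
    (Φ₀ : Matrix (Fin (n * k)) (Fin (n * n)) ℝ)
    (hΦ₀ : Φ₀ = (1 / Real.sqrt k) • Φ)
    (k' : ℕ) (hk'1 : 1 ≤ k') (hk' : k' < k + 1) :
    (∀ x : Fin (n * n) → ℝ,
        (Finset.univ.filter fun j => x j ≠ 0).card ≤ k' →
        (1 - ((k' : ℝ) - 1) / k) * ∑ j, x j ^ 2 ≤ ∑ i, (Φ₀.mulVec x i) ^ 2 ∧
        ∑ i, (Φ₀.mulVec x i) ^ 2 ≤ (1 + ((k' : ℝ) - 1) / k) * ∑ j, x j ^ 2) ∧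
    (k' ≤ k → ((k' : ℝ) - 1) / k < 1) := by
  have hkpos : (0:ℝ) < (k:ℝ) := by exact_mod_cast Nat.lt_of_lt_of_le Nat.zero_lt_one hk
  constructor
  · intro x hx
    set A : ℝ := ∑ j, x j ^ 2 with hA
    have hA0 : 0 ≤ A := Finset.sum_nonneg fun j _ => sq_nonneg _
    -- Gram matrix
    set G : Fin (n*n) → Fin (n*n) → ℝ := fun c d => ∑ i, Φ i c * Φ i d with hG
    have hGdiag : ∀ c, G c c = k := by
      intro c
      have h1 : ∀ i : Fin (n*k), Φ i c * Φ i c = if Φ i c = 1 then (1:ℝ) else 0 := by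
        intro i; rcases hbin i c with h | h <;> simp [h]
      calc G c c = ∑ i, if Φ i c = 1 then (1:ℝ) else 0 :=
            Finset.sum_congr rfl fun i _ => h1 i
        _ = ((Finset.univ.filter fun i => Φ i c = 1).card : ℝ) := by
            rw [Finset.sum_boole]
        _ = k := by rw [hones c]
    have hGoff : ∀ c d, c ≠ d → |G c d| ≤ 1 := by
      intro c d hcd
      have h1 : ∀ i : Fin (n*k), Φ i c * Φ i d
          = if (Φ i c = 1 ∧ Φ i d = 1) then (1:ℝ) else 0 := by
        intro i
        rcases hbin i c with h | h <;> rcases hbin i d with h' | h' <;>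
          simp [h, h']
      have h2 : G c d = ((Finset.univ.filter fun i => Φ i c = 1 ∧ Φ i d = 1).card : ℝ) := by
        calc G c d = ∑ i, if (Φ i c = 1 ∧ Φ i d = 1) then (1:ℝ) else 0 :=
              Finset.sum_congr rfl fun i _ => h1 i
          _ = _ := by rw [Finset.sum_boole]
      rw [h2, abs_of_nonneg (by positivity)]
      exact_mod_cast hoverlap c d hcd
    -- expand the quadratic form
    have key : ∑ i, (Φ.mulVec x i) ^ 2 = ∑ c, ∑ d, (x c * x d) * G c d := by
      have h1 : ∀ i : Fin (n*k),
          (Φ.mulVec x i) ^ 2 = ∑ c, ∑ d, (x c * x d) * (Φ i c * Φ i d) := by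
        intro i
        rw [Matrix.mulVec, dotProduct, sq, Finset.sum_mul_sum]
        exact Finset.sum_congr rfl fun c _ => Finset.sum_congr rfl fun d _ => by ring
      rw [Finset.sum_congr rfl fun i _ => h1 i, Finset.sum_comm]
      refine Finset.sum_congr rfl fun c _ => ?_
      rw [Finset.sum_comm]
      refine Finset.sum_congr rfl fun d _ => ?_
      rw [hG, Finset.mul_sum]
    -- split off diagonal
    set E : ℝ := ∑ c, ∑ d ∈ Finset.univ.erase c, (x c * x d) * G c d with hE
    have split : ∑ c, ∑ d, (x c * x d) * G c d = (k:ℝ) * A + E := by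
      rw [hA, hE, Finset.mul_sum, ← Finset.sum_add_distrib]
      refine Finset.sum_congr rfl fun c _ => ?_
      rw [← Finset.add_sum_erase _ _ (Finset.mem_univ c), hGdiag c]
      ring
    -- bound |E|
    have habs : |E| ≤ (∑ c, |x c|) ^ 2 - ∑ c, x c ^ 2 := by
      have h1 : |E| ≤ ∑ c, ∑ d ∈ Finset.univ.erase c, |x c| * |x d| := by
        refine (Finset.abs_sum_le_sum_abs _ _).trans ?_
        refine Finset.sum_le_sum fun c _ => ?_
        refine (Finset.abs_sum_le_sum_abs _ _).trans ?_
        refine Finset.sum_le_sum fun d hd => ?_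
        rw [abs_mul, abs_mul]
        have := hGoff c d (fun h => (Finset.mem_erase.mp hd).1 h.symm)
        calc |x c| * |x d| * |G c d| ≤ |x c| * |x d| * 1 := by
              exact mul_le_mul_of_nonneg_left this (by positivity)
          _ = |x c| * |x d| := by ring
      refine h1.trans (le_of_eq ?_)
      have h2 : ∀ c : Fin (n*n), ∑ d ∈ Finset.univ.erase c, |x c| * |x d|
          = |x c| * (∑ d, |x d|) - x c ^ 2 := by
        intro c
        rw [← Finset.mul_sum, Finset.sum_erase_eq_sub (Finset.mem_univ c)]
        rw [mul_sub, ← sq_abs (x c)]; ring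
      rw [Finset.sum_congr rfl fun c _ => h2 c, Finset.sum_sub_distrib,
        ← Finset.sum_mul, sq]
    -- Cauchy–Schwarz with sparsity
    have hCS : (∑ c, |x c|) ^ 2 ≤ (k':ℝ) * A := by
      set S := Finset.univ.filter fun j => x j ≠ 0 with hS
      have e1 : ∑ c ∈ S, |x c| = ∑ c, |x c| :=
        Finset.sum_filter_of_ne fun c _ h => fun h0 => h (by simp [h0])
      have e2 : ∑ c ∈ S, x c ^ 2 = ∑ c, x c ^ 2 :=
        Finset.sum_filter_of_ne fun c _ h => fun h0 => h (by simp [h0])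
      have := sq_sum_le_card_mul_sum_sq (s := S) (f := fun c => |x c|)
      simp only [sq_abs] at this
      rw [e1, e2] at this
      refine this.trans ?_
      have hc : (S.card : ℝ) ≤ (k' : ℝ) := by exact_mod_cast hx
      exact mul_le_mul_of_nonneg_right hc hA0
    have hk'1' : (1:ℝ) ≤ (k':ℝ) := by exact_mod_cast hk'1
    have hEbound : |E| ≤ ((k':ℝ) - 1) * A := by
      have : ∑ c, x c ^ 2 = A := rfl
      linarith [habs, hCS]
    obtain ⟨hEl, hEr⟩ := abs_le.mp hEbound
    -- normalization
    have hΦ₀sum : ∑ i, (Φ₀.mulVec x i) ^ 2 = ((k:ℝ) * A + E) / k := by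
      have hs : (1 / Real.sqrt k) ^ 2 = 1 / (k:ℝ) := by
        rw [div_pow, one_pow, Real.sq_sqrt hkpos.le]
      have h1 : ∑ i, (Φ₀.mulVec x i) ^ 2 = (1/(k:ℝ)) * ∑ i, (Φ.mulVec x i) ^ 2 := by
        subst hΦ₀
        rw [Finset.mul_sum]
        refine Finset.sum_congr rfl fun i _ => ?_
        rw [Matrix.smul_mulVec]
        simp only [Pi.smul_apply, smul_eq_mul, mul_pow, hs]
      rw [h1, key, split]; ring
    rw [hΦ₀sum]
    constructor
    · rw [le_div_iff₀ hkpos]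
      have h2 : (1 - ((k':ℝ) - 1) / k) * A * k = (k:ℝ) * A - ((k':ℝ)-1) * A := by
        field_simp
      linarith
    · rw [div_le_iff₀ hkpos]
      have h2 : (1 + ((k':ℝ) - 1) / k) * A * k = (k:ℝ) * A + ((k':ℝ)-1) * A := by
        field_simp
      linarith
  · intro h
    rw [div_lt_one hkpos]
    have : (k':ℝ) ≤ (k:ℝ) := by exact_mod_cast h
    linarith
end

section
/- For any m × M matrix Φ with M > m and unit-norm columns, the coherence satisfies μ(Φ) ≥ √((M−m)/(m(M−1))) (the Welch bound). -/
open scoped Classical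

/-- Welch bound: for an m × M matrix with M > m and unit-norm columns, some
pair of distinct columns has absolute inner product at least
√((M−m)/(m(M−1))); hence the coherence is at least the Welch bound. -/
theorem welch_bound
    (m M : ℕ) (hm : 0 < m) (hMm : m < M)
    (Φ : Matrix (Fin m) (Fin M) ℝ)
    (hunit : ∀ j, ∑ i, Φ i j ^ 2 = 1) :
    ∃ c d : Fin M, c ≠ d ∧
      Real.sqrt (((M : ℝ) - m) / (m * ((M : ℝ) - 1))) ≤ |∑ i, Φ i c * Φ i d| := by
  set G : Matrix (Fin M) (Fin M) ℝ := Φ.transpose * Φ with hG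
  set A : Matrix (Fin m) (Fin m) ℝ := Φ * Φ.transpose with hA
  have hGapp : ∀ c d, G c d = ∑ i, Φ i c * Φ i d := by
    intro c d
    simp [hG, Matrix.mul_apply, Matrix.transpose_apply]
  have hAapp : ∀ i j, A i j = ∑ c, Φ i c * Φ j c := by
    intro i j
    simp [hA, Matrix.mul_apply, Matrix.transpose_apply]
  have hGdiag : ∀ c, G c c = 1 := by
    intro c; rw [hGapp]; simpa [sq] using hunit c
  -- trace of A equals M
  have htrA : ∑ i, A i i = (M : ℝ) := by
    have : ∑ i : Fin m, A i i = ∑ i : Fin m, ∑ c : Fin M, Φ i c ^ 2 := by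
      simp [hAapp, sq]
    rw [this, Finset.sum_comm]
    simp [hunit]
  -- trace (G*G) = trace (A*A)
  have htr : Matrix.trace (G * G) = Matrix.trace (A * A) := by
    rw [hG, hA, Matrix.mul_assoc, Matrix.trace_mul_comm]
    simp only [Matrix.mul_assoc]
  have hGsq : Matrix.trace (G * G) = ∑ c : Fin M, ∑ d : Fin M, (G c d) ^ 2 := by
    unfold Matrix.trace
    simp only [Matrix.diag_apply, Matrix.mul_apply, sq]
    refine Finset.sum_congr rfl fun c _ => Finset.sum_congr rfl fun d _ => ?_
    rw [hGapp c d, hGapp d c]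
    congr 1
    exact Finset.sum_congr rfl fun i _ => mul_comm _ _
  have hAsq : Matrix.trace (A * A) = ∑ i : Fin m, ∑ j : Fin m, (A i j) ^ 2 := by
    unfold Matrix.trace
    simp only [Matrix.diag_apply, Matrix.mul_apply, sq]
    refine Finset.sum_congr rfl fun i _ => Finset.sum_congr rfl fun j _ => ?_
    rw [hAapp i j, hAapp j i]
    congr 1
    exact Finset.sum_congr rfl fun c _ => mul_comm _ _
  -- Cauchy–Schwarz: M^2 ≤ m * ∑ A i i ^ 2
  have hCS : (M : ℝ) ^ 2 ≤ (m : ℝ) * ∑ i, A i i ^ 2 := by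
    have := sq_sum_le_card_mul_sum_sq (s := Finset.univ) (f := fun i : Fin m => A i i)
    simpa [htrA] using this
  have hdiagle : ∑ i, A i i ^ 2 ≤ ∑ i : Fin m, ∑ j : Fin m, (A i j) ^ 2 := by
    refine Finset.sum_le_sum fun i _ => ?_
    refine Finset.single_le_sum (f := fun j => A i j ^ 2) (fun j _ => sq_nonneg _) (Finset.mem_univ i)
  have hT : (M : ℝ) ^ 2 ≤ (m : ℝ) * ∑ c : Fin M, ∑ d : Fin M, (G c d) ^ 2 := by
    calc (M:ℝ)^2 ≤ (m:ℝ) * ∑ i, A i i ^ 2 := hCS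
    _ ≤ (m:ℝ) * ∑ i : Fin m, ∑ j : Fin m, (A i j) ^ 2 := by
        exact mul_le_mul_of_nonneg_left hdiagle (by positivity)
    _ = (m:ℝ) * ∑ c : Fin M, ∑ d : Fin M, (G c d) ^ 2 := by rw [← hAsq, ← htr, hGsq]
  -- split into diagonal + offdiagonal
  have hsplit : ∑ c : Fin M, ∑ d : Fin M, (G c d) ^ 2
      = (M : ℝ) + ∑ p ∈ Finset.univ.offDiag, (G p.1 p.2) ^ 2 := by
    rw [← Finset.sum_product']
    rw [← Finset.diag_union_offDiag, Finset.sum_union (Finset.disjoint_diag_offDiag _),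
      Finset.sum_diag]
    simp [hGdiag]
  -- numeric facts
  have hm1 : (1:ℝ) ≤ (m:ℝ) := by exact_mod_cast hm
  have hM1 : (m:ℝ) < (M:ℝ) := by exact_mod_cast hMm
  have hM2 : (2:ℝ) ≤ (M:ℝ) := by
    have : 2 ≤ M := by omega
    exact_mod_cast this
  have hMpos : (0:ℝ) < (M:ℝ) - 1 := by linarith
  have hmpos : (0:ℝ) < (m:ℝ) := by linarith
  set t : ℝ := ((M : ℝ) - m) / (m * ((M : ℝ) - 1)) with ht
  have hcard : (Finset.univ.offDiag : Finset (Fin M × Fin M)).card = M * M - M := by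
    simp [Finset.offDiag_card]
  have hsumt : ∑ _p ∈ (Finset.univ.offDiag : Finset (Fin M × Fin M)), t
      ≤ ∑ p ∈ Finset.univ.offDiag, (G p.1 p.2) ^ 2 := by
    rw [Finset.sum_const, hcard, nsmul_eq_mul]
    have hcardR : ((M * M - M : ℕ) : ℝ) = (M:ℝ) * ((M:ℝ) - 1) := by
      have : M ≤ M * M := Nat.le_mul_of_pos_left M (by omega)
      push_cast [Nat.cast_sub this]
      ring
    rw [hcardR]
    have key : (M:ℝ) * ((M:ℝ) - 1) * t = ((M:ℝ)^2 / m) - (M:ℝ) := by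
      rw [ht]
      field_simp
    rw [key]
    have : (M:ℝ)^2 / m ≤ (M:ℝ) + ∑ p ∈ Finset.univ.offDiag, (G p.1 p.2) ^ 2 := by
      rw [div_le_iff₀ hmpos, ← hsplit]
      linarith [hT]
    linarith
  have hne : (Finset.univ.offDiag : Finset (Fin M × Fin M)).Nonempty := by
    refine ⟨(⟨0, by omega⟩, ⟨1, by omega⟩), ?_⟩
    simp [Finset.mem_offDiag, Fin.ext_iff]
  obtain ⟨p, hp, hpt⟩ := Finset.exists_le_of_sum_le hne hsumt
  rw [Finset.mem_offDiag] at hp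
  refine ⟨p.1, p.2, hp.2.2, ?_⟩
  rw [← hGapp]
  calc Real.sqrt t ≤ Real.sqrt ((G p.1 p.2) ^ 2) := Real.sqrt_le_sqrt hpt
  _ = |G p.1 p.2| := Real.sqrt_sq_eq_abs _
end

section
/- Let Φ be an m × M matrix with unit-norm columns and coherence μ, and let u ∈ ℝ^M be k-sparse with k < (1/2)(1 + 1/μ). Then u is the unique sparsest solution of Φv = Φu: any v ≠ u with Φv = Φu satisfies ‖v‖₀ > ‖u‖₀. -/
open scoped Classical

open Matrix

/-!
If `Φ w = 0` with `w ≠ 0`, then `w` restricted to its support `S` is a nonzero kernel vector of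
the Gram matrix of the columns indexed by `S`. That matrix has unit diagonal and off-diagonal
entries of size at most `μ`, so Gershgorin's theorem forces `1 ≤ (|S| - 1) μ`, i.e.
`|S| ≥ 1 + 1/μ`. Applied to `w = v - u`, whose support has at most `‖u‖₀ + ‖v‖₀` elements,
this rules out `‖v‖₀ ≤ ‖u‖₀ ≤ k < (1 + 1/μ) / 2`.
-/

theorem Matrix.exists_norm_diag_le_sum_row_of_mulVec_eq_zero {K n : Type*} [NormedField K]
    [Fintype n] [DecidableEq n] {A : Matrix n n K} {x : n → K} (hx : x ≠ 0)
    (hAx : A *ᵥ x = 0) : ∃ k, ‖A k k‖ ≤ ∑ j ∈ Finset.univ.erase k, ‖A k j‖ := by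
  by_contra! h
  exact det_ne_zero_of_sum_row_lt_diag h (exists_mulVec_eq_zero_iff.mp ⟨x, hx, hAx⟩)

theorem Matrix.submatrix_support_mulVec {R m n : Type*} [CommSemiring R] [Fintype m] [Fintype n]
    (Φ : Matrix m n R) (w : n → R) :
    Φ.submatrix id ((↑) : {j // w j ≠ 0} → n) *ᵥ (fun j => w j) = Φ *ᵥ w := by
  ext i
  change ∑ j : {j // w j ≠ 0}, Φ i j * w j = ∑ j, Φ i j * w j
  exact (Finset.sum_subtype _ (fun j => Finset.mem_filter_univ j) fun j => Φ i j * w j).symm.trans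
    (Finset.sum_filter_of_ne fun j _ (h : Φ i j * w j ≠ 0) => right_ne_zero_of_mul h)

theorem one_add_inv_le_card_support_of_mulVec_eq_zero {m n : Type*} [Fintype m] [Fintype n]
    (Φ : Matrix m n ℝ) (μ : ℝ) (hunit : ∀ j, ∑ i, Φ i j ^ 2 = 1)
    (hμ : ∀ c d, c ≠ d → |∑ i, Φ i c * Φ i d| ≤ μ)
    {w : n → ℝ} (hw : w ≠ 0) (hΦw : Φ *ᵥ w = 0) :
    1 + 1 / μ ≤ (Finset.univ.filter fun j => w j ≠ 0).card := by
  set Ψ := Φ.submatrix id ((↑) : {j // w j ≠ 0} → n)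
  have hΨ : (Ψᵀ * Ψ) *ᵥ (fun j => w j) = 0 := by
    rw [← mulVec_mulVec, submatrix_support_mulVec, hΦw, mulVec_zero]
  have hw' : (fun j : {j // w j ≠ 0} => w j) ≠ 0 := by
    obtain ⟨j, hj⟩ := Function.ne_iff.mp hw
    exact Function.ne_iff.mpr ⟨⟨j, hj⟩, hj⟩
  obtain ⟨k, hk⟩ := exists_norm_diag_le_sum_row_of_mulVec_eq_zero hw' hΨ
  have hcard : Fintype.card {j // w j ≠ 0} = (Finset.univ.filter fun j => w j ≠ 0).card :=
    Fintype.card_subtype _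
  have hcard_pos : 0 < Fintype.card {j // w j ≠ 0} := Fintype.card_pos_iff.mpr ⟨k⟩
  have hgershgorin : 1 ≤ ((Finset.univ.filter fun j => w j ≠ 0).card - 1 : ℝ) * μ := by
    calc (1 : ℝ) = ‖(Ψᵀ * Ψ) k k‖ := by simp [Ψ, mul_apply, ← sq, hunit]
      _ ≤ ∑ j ∈ Finset.univ.erase k, ‖(Ψᵀ * Ψ) k j‖ := hk
      _ ≤ ∑ j ∈ Finset.univ.erase k, μ := Finset.sum_le_sum fun j hj =>
          hμ _ _ (Subtype.val_injective.ne (Finset.ne_of_mem_erase hj).symm)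
      _ = _ := by
          rw [Finset.sum_const, Finset.card_erase_of_mem (Finset.mem_univ k), Finset.card_univ,
            hcard, nsmul_eq_mul, Nat.cast_pred (hcard ▸ hcard_pos)]
  have hμ_pos : 0 < μ := pos_of_mul_pos_right (one_pos.trans_le hgershgorin)
    (by rw [← hcard, sub_nonneg, Nat.one_le_cast]; exact hcard_pos)
  linarith [(div_le_iff₀ hμ_pos).mpr hgershgorin]

theorem card_support_sub_le {n R : Type*} [Fintype n] [AddGroup R] (u v : n → R) :
    (Finset.univ.filter fun j => (v - u) j ≠ 0).card ≤
      (Finset.univ.filter fun j => u j ≠ 0).card + (Finset.univ.filter fun j => v j ≠ 0).card := by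
  refine (Finset.card_le_card fun j => ?_).trans (Finset.card_union_le _ _)
  simp only [Finset.mem_filter, Finset.mem_univ, true_and, Finset.mem_union, Pi.sub_apply]
  contrapose!
  rintro ⟨hu, hv⟩
  rw [hu, hv, sub_zero]

theorem sparse_uniqueness_general
    (m M : ℕ) (Φ : Matrix (Fin m) (Fin M) ℝ) (μ : ℝ)
    (hunit : ∀ j, ∑ i, Φ i j ^ 2 = 1)
    (hμ : ∀ c d, c ≠ d → |∑ i, Φ i c * Φ i d| ≤ μ)
    (u : Fin M → ℝ) (k : ℕ)
    (hu : (Finset.univ.filter fun j => u j ≠ 0).card ≤ k)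
    (hk : (k : ℝ) < (1 / 2) * (1 + 1 / μ))
    (v : Fin M → ℝ) (hv : Φ.mulVec v = Φ.mulVec u) (hvu : v ≠ u) :
    (Finset.univ.filter fun j => u j ≠ 0).card <
      (Finset.univ.filter fun j => v j ≠ 0).card := by
  have hspark := one_add_inv_le_card_support_of_mulVec_eq_zero Φ μ hunit hμ
    (sub_ne_zero.mpr hvu) (by rw [mulVec_sub, hv, sub_self])
  by_contra! hvu_le
  have hsupp : (Finset.univ.filter fun j => (v - u) j ≠ 0).card ≤ 2 * k := by
    have := card_support_sub_le u v
    omega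
  have : ((Finset.univ.filter fun j => (v - u) j ≠ 0).card : ℝ) ≤ 2 * k := by exact_mod_cast hsupp
  linarith

/-- Uniqueness of sparse solutions: if u is k-sparse with
k < (1/2)(1 + 1/μ), then u is the unique sparsest solution of Φv = Φu. -/
theorem sparse_uniqueness
    (m M : ℕ) (Φ : Matrix (Fin m) (Fin M) ℝ) (μ : ℝ) (hμ0 : 0 < μ)
    (hunit : ∀ j, ∑ i, Φ i j ^ 2 = 1)
    (hμ : ∀ c d, c ≠ d → |∑ i, Φ i c * Φ i d| ≤ μ)
    (u : Fin M → ℝ) (k : ℕ)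
    (hu : (Finset.univ.filter fun j => u j ≠ 0).card ≤ k)
    (hk : (k : ℝ) < (1 / 2) * (1 + 1 / μ))
    (v : Fin M → ℝ) (hv : Φ.mulVec v = Φ.mulVec u) (hvu : v ≠ u) :
    (Finset.univ.filter fun j => u j ≠ 0).card <
      (Finset.univ.filter fun j => v j ≠ 0).card :=
  sparse_uniqueness_general m M Φ μ hunit hμ u k hu hk v hv hvu
end

section
/- Let Φ be an m × M matrix with unit-norm columns and coherence μ. Then every nonzero vector h in the kernel of Φ satisfies ‖h‖₀ ≥ 1 + 1/μ (i.e., spark(Φ) ≥ 1 + 1/μ). -/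
open scoped Classical

/-- Spark bound: every nonzero kernel vector of a unit-norm-column matrix
with coherence μ has at least 1 + 1/μ nonzero entries. -/
theorem spark_lower_bound
    (m M : ℕ) (Φ : Matrix (Fin m) (Fin M) ℝ) (μ : ℝ) (hμ0 : 0 < μ)
    (hunit : ∀ j, ∑ i, Φ i j ^ 2 = 1)
    (hμ : ∀ c d, c ≠ d → |∑ i, Φ i c * Φ i d| ≤ μ)
    (h : Fin M → ℝ) (hker : Φ.mulVec h = 0) (hne : h ≠ 0) :
    1 + 1 / μ ≤ ((Finset.univ.filter fun j => h j ≠ 0).card : ℝ) := by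
  classical
  set T := Finset.univ.filter fun j => h j ≠ 0 with hT
  have hTne : T.Nonempty := by
    have : ∃ j, h j ≠ 0 := by
      by_contra hc; push_neg at hc; exact hne (funext hc)
    obtain ⟨j, hj⟩ := this
    exact ⟨j, by simp [hT, hj]⟩
  obtain ⟨j, hjT, hjmax⟩ := T.exists_max_image (fun c => |h c|) hTne
  have hhj : h j ≠ 0 := by simpa [hT] using hjT
  have hhjpos : 0 < |h j| := abs_pos.mpr hhj
  -- key identity: row j of Gram matrix applied to h is 0
  have key0 : ∑ c, (∑ i, Φ i j * Φ i c) * h c = 0 := by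
    have h1 : ∀ i, Φ.mulVec h i = 0 := fun i => congrFun hker i
    calc ∑ c, (∑ i, Φ i j * Φ i c) * h c
        = ∑ c, ∑ i, Φ i j * (Φ i c * h c) := by
          simp [Finset.sum_mul, mul_assoc]
      _ = ∑ i, Φ i j * ∑ c, Φ i c * h c := by
          rw [Finset.sum_comm]; simp [Finset.mul_sum]
      _ = 0 := by
          refine Finset.sum_eq_zero fun i _ => ?_
          have h2 : ∑ c, Φ i c * h c = 0 := by
            simpa [Matrix.mulVec, dotProduct] using h1 i
          rw [h2, mul_zero]
  have gjj : (∑ i, Φ i j * Φ i j) = 1 := by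
    simpa [sq] using hunit j
  have key : h j = -∑ c ∈ Finset.univ.erase j, (∑ i, Φ i j * Φ i c) * h c := by
    have e := (Finset.add_sum_erase Finset.univ
      (fun c => (∑ i, Φ i j * Φ i c) * h c) (Finset.mem_univ j)).trans key0
    simp only [gjj, one_mul] at e
    linarith
  have hbound : |h j| ≤ μ * ((T.erase j).card : ℝ) * |h j| := by
    have step1 : |h j| ≤ ∑ c ∈ Finset.univ.erase j, μ * |h c| := by
      rw [key, abs_neg]
      refine (Finset.abs_sum_le_sum_abs _ _).trans ?_
      refine Finset.sum_le_sum fun c hc => ?_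
      rw [abs_mul]
      have hcj : j ≠ c := fun e => (Finset.mem_erase.mp hc).1 e.symm
      exact mul_le_mul_of_nonneg_right (hμ j c hcj) (abs_nonneg _)
    have step2 : ∑ c ∈ Finset.univ.erase j, μ * |h c|
        = ∑ c ∈ T.erase j, μ * |h c| := by
      refine (Finset.sum_subset ?_ ?_).symm
      · intro c hc
        rcases Finset.mem_erase.mp hc with ⟨hcj, _⟩
        exact Finset.mem_erase.mpr ⟨hcj, Finset.mem_univ c⟩
      · intro c hc hcn
        rcases Finset.mem_erase.mp hc with ⟨hcj, _⟩
        have : h c = 0 := by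
          by_contra hc0
          exact hcn (Finset.mem_erase.mpr ⟨hcj, by simp [hT, hc0]⟩)
        simp [this]
    have step3 : ∑ c ∈ T.erase j, μ * |h c|
        ≤ ∑ c ∈ T.erase j, μ * |h j| := by
      refine Finset.sum_le_sum fun c hc => ?_
      exact mul_le_mul_of_nonneg_left
        (hjmax c (Finset.mem_of_mem_erase hc)) hμ0.le
    calc |h j| ≤ ∑ c ∈ Finset.univ.erase j, μ * |h c| := step1
      _ = ∑ c ∈ T.erase j, μ * |h c| := step2
      _ ≤ ∑ c ∈ T.erase j, μ * |h j| := step3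
      _ = μ * ((T.erase j).card : ℝ) * |h j| := by
          rw [Finset.sum_const, nsmul_eq_mul]; ring
  have hcard : ((T.erase j).card : ℝ) = (T.card : ℝ) - 1 := by
    rw [Finset.card_erase_of_mem hjT]
    have h1c : 1 ≤ T.card := Finset.card_pos.mpr hTne
    rw [Nat.cast_sub h1c, Nat.cast_one]
  have h1 : 1 ≤ μ * ((T.card : ℝ) - 1) := by
    rw [hcard] at hbound
    nlinarith
  have h2 : 1 / μ ≤ (T.card : ℝ) - 1 := by
    rw [div_le_iff₀ hμ0]
    nlinarith
  linarith
end

section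
/- For every prime p, an Euler square of index (p, p−1) exists. Explicitly, the array defined over ℤ/pℤ by a_{ijr} = i·r + j (mod p) for i,j ∈ {0,…,p−1} and r ∈ {1,…,p−1} is an Euler square of index (p, p−1), where the defining conditions are interpreted with the row/column distinctness and the pairwise-difference (orthogonality) condition that for i ≠ p', j ≠ q' and r ≠ s, the pairs (a_{ijr}, a_{ijs}) and (a_{p'q'r}, a_{p'q's}) are distinct. -/
lemma fin_cast_inj' (p : ℕ) [NeZero p] (x y : Fin p)
    (h : ((x : ℕ) : ZMod p) = ((y : ℕ) : ZMod p)) : x = y := by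
  have := congrArg ZMod.val h
  rw [ZMod.val_natCast_of_lt x.isLt, ZMod.val_natCast_of_lt y.isLt] at this
  exact Fin.ext this

lemma rplus_ne (p : ℕ) [NeZero p] (r : Fin (p - 1)) :
    (((r : ℕ) : ZMod p) + 1) ≠ 0 := by
  have hr : (r : ℕ) + 1 < p := by omega
  have : (((r : ℕ) + 1 : ℕ) : ZMod p) ≠ 0 := by
    rw [Ne, ZMod.natCast_eq_zero_iff]
    exact fun hd => absurd (Nat.le_of_dvd (Nat.succ_pos _) hd) (by omega)
  simpa using this

lemma rdiff_ne (p : ℕ) [NeZero p] (r s : Fin (p - 1)) (h : r ≠ s) :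
    (((r : ℕ) : ZMod p) + 1) ≠ (((s : ℕ) : ZMod p) + 1) := by
  intro he
  have he' : (((r : ℕ) : ZMod p)) = (((s : ℕ) : ZMod p)) := by linear_combination he
  have := congrArg ZMod.val he'
  rw [ZMod.val_natCast_of_lt (by omega), ZMod.val_natCast_of_lt (by omega)] at this
  exact h (Fin.ext this)

/-- For every prime p, the array a_{ijr} = i·(r+1) + j (mod p) (with r ranging
over the p−1 nonzero multipliers) is an Euler square of index (p, p−1): each
coordinate is distinct along rows and columns, and distinct cells give
distinct pairs in any two coordinates. -/
theorem euler_square_of_prime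
    (p : ℕ) (hp : p.Prime)
    (a : Fin p → Fin p → Fin (p - 1) → Fin p)
    (ha : ∀ (i j : Fin p) (r : Fin (p - 1)),
      ((a i j r : ℕ) : ZMod p) = (i : ZMod p) * ((r : ℕ) + 1 : ZMod p) + (j : ZMod p)) :
    (∀ (i p' q : Fin p) (r : Fin (p - 1)), p' ≠ q → a i p' r ≠ a i q r) ∧
    (∀ (p' q j : Fin p) (r : Fin (p - 1)), p' ≠ q → a p' j r ≠ a q j r) ∧
    (∀ (i j p' q : Fin p) (r s : Fin (p - 1)), i ≠ p' → j ≠ q → r ≠ s →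
      (a i j r, a i j s) ≠ (a p' q r, a p' q s)) := by
  haveI : Fact p.Prime := ⟨hp⟩
  refine ⟨?_, ?_, ?_⟩
  · intro i p' q r hne he
    apply hne
    have h := congrArg (fun x : Fin p => ((x : ℕ) : ZMod p)) he
    simp only [ha] at h
    have : ((p' : ℕ) : ZMod p) = ((q : ℕ) : ZMod p) := by
      have : (i : ZMod p) = ((i : ℕ) : ZMod p) := rfl
      linear_combination h
    exact fin_cast_inj' p _ _ this
  · intro p' q j r hne he
    apply hne
    have h := congrArg (fun x : Fin p => ((x : ℕ) : ZMod p)) he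
    simp only [ha] at h
    have h2 : ((p' : ℕ) : ZMod p) * (((r : ℕ) : ZMod p) + 1)
        = ((q : ℕ) : ZMod p) * (((r : ℕ) : ZMod p) + 1) := by linear_combination h
    have := mul_right_cancel₀ (rplus_ne p r) h2
    exact fin_cast_inj' p _ _ this
  · intro i j p' q r s hi hj hr he
    apply hi
    obtain ⟨he1, he2⟩ := Prod.mk.injEq .. ▸ he
    have h1 := congrArg (fun x : Fin p => ((x : ℕ) : ZMod p)) he1
    have h2 := congrArg (fun x : Fin p => ((x : ℕ) : ZMod p)) he2
    simp only [ha] at h1 h2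
    have hd : (((i : ℕ) : ZMod p) - ((p' : ℕ) : ZMod p)) *
        ((((r : ℕ) : ZMod p) + 1) - (((s : ℕ) : ZMod p) + 1)) = 0 := by
      linear_combination h1 - h2
    have hrs : ((((r : ℕ) : ZMod p) + 1) - (((s : ℕ) : ZMod p) + 1)) ≠ 0 :=
      sub_ne_zero.mpr (rdiff_ne p r s hr)
    have : ((i : ℕ) : ZMod p) = ((p' : ℕ) : ZMod p) :=
      sub_eq_zero.mp ((mul_eq_zero.mp hd).resolve_right hrs)
    exact fin_cast_inj' p _ _ this
end

section
/- Let Φ be a p(p−j) × p² binary matrix (p prime, j ∈ {1,2}, p−j ≥ 2) with exactly p−j ones per column and pairwise column overlaps at most 1, and let H be a (p−j) × (p−j) Hadamard matrix (entries ±1 with H Hᵀ = (p−j)I). Form Ψ by replacing, in each column of Φ (repeated for each row of H), the r-th 1-entry by the corresponding entry of the r-th coordinate of a fixed row of H, giving a ternary matrix of size p(p−j) × p²(p−j). Then the coherence of Ψ is at most 1/(p−j). -/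
/-!
Every column of Ψ is a row of H written onto the support of a column of Φ, so it has squared
norm `p - j`. Two columns over the same column of Φ are orthogonal because the rows of H are;
two columns over different columns of Φ meet in at most one position, where both entries are
`±1`, so their inner product is at most `1` in absolute value.
-/

open scoped Classical

open Finset

theorem abs_sum_mul_le_card_support_inter {ι 𝕜 : Type*} [Fintype ι] [Ring 𝕜] [LinearOrder 𝕜]
    [IsStrictOrderedRing 𝕜] {u v : ι → 𝕜}
    (hu : ∀ i, |u i| ≤ 1) (hv : ∀ i, |v i| ≤ 1) :
    |∑ i, u i * v i| ≤ #{i | u i ≠ 0 ∧ v i ≠ 0} := by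
  have hterm : ∀ i, |u i * v i| ≤ if u i ≠ 0 ∧ v i ≠ 0 then 1 else 0 := by
    intro i
    split_ifs with h
    · rw [abs_mul]
      exact mul_le_one₀ (hu i) (abs_nonneg _) (hv i)
    · rcases not_and_or.mp h with h | h <;> simp [not_not.mp h]
  calc |∑ i, u i * v i| ≤ ∑ i, |u i * v i| := abs_sum_le_sum_abs _ _
    _ ≤ ∑ i, if u i ≠ 0 ∧ v i ≠ 0 then (1 : 𝕜) else 0 := sum_le_sum fun i _ => hterm i
    _ = #{i | u i ≠ 0 ∧ v i ≠ 0} := sum_boole _ _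

structure IsModulation {ι κ R : Type*} (Ψ : Matrix ι (κ × R) ℝ) (e : κ → R → ι)
    (H : Matrix R R ℝ) : Prop where
  injective : ∀ c, Function.Injective (e c)
  apply_embedding : ∀ c h r, Ψ (e c r) (c, h) = H h r
  apply_eq_zero : ∀ c h i, (∀ r, i ≠ e c r) → Ψ i (c, h) = 0

namespace IsModulation

variable {ι κ R : Type*} {Ψ : Matrix ι (κ × R) ℝ} {e : κ → R → ι}
  {H : Matrix R R ℝ}

theorem sum_mul [Fintype ι] [Fintype R] (hΨ : IsModulation Ψ e H) (c : κ) (h : R) (g : ι → ℝ) :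
    ∑ i, Ψ i (c, h) * g i = ∑ r, H h r * g (e c r) := by
  refine (Fintype.sum_of_injective (e c) (hΨ.injective c) _ _ (fun i hi => ?_) fun r => ?_).symm
  · rw [hΨ.apply_eq_zero c h i fun r hr => hi ⟨r, hr.symm⟩, zero_mul]
  · rw [hΨ.apply_embedding]

theorem exists_eq_of_apply_ne_zero (hΨ : IsModulation Ψ e H) {c : κ} {h : R} {i : ι}
    (hi : Ψ i (c, h) ≠ 0) : ∃ r, i = e c r := by
  by_contra! hne
  exact hi (hΨ.apply_eq_zero c h i hne)

theorem abs_apply_le_one (hΨ : IsModulation Ψ e H) (hH : ∀ r t, |H r t| = 1) (i : ι)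
    (x : κ × R) : |Ψ i x| ≤ 1 := by
  obtain ⟨c, h⟩ := x
  by_cases hi : Ψ i (c, h) = 0
  · simp [hi]
  · obtain ⟨r, rfl⟩ := hΨ.exists_eq_of_apply_ne_zero hi
    rw [hΨ.apply_embedding, hH]

theorem sum_sq [Fintype ι] [Fintype R] (hΨ : IsModulation Ψ e H) (hH : ∀ r t, |H r t| = 1)
    (c : κ) (h : R) : ∑ i, Ψ i (c, h) ^ 2 = Fintype.card R := by
  have hsq : ∀ r, H h r * H h r = 1 := fun r => by rw [← abs_mul_abs_self, hH, one_mul]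
  simp_rw [sq, hΨ.sum_mul, hΨ.apply_embedding, hsq]
  simp

theorem sum_mul_eq_zero_of_ne [Fintype ι] [Fintype R] (hΨ : IsModulation Ψ e H)
    (hHorth : ∀ r s, r ≠ s → ∑ t, H r t * H s t = 0) (c : κ) {h h' : R} (hh : h ≠ h') :
    ∑ i, Ψ i (c, h) * Ψ i (c, h') = 0 := by
  simp_rw [hΨ.sum_mul, hΨ.apply_embedding]
  exact hHorth h h' hh

theorem card_support_inter_le [Fintype ι] (hΨ : IsModulation Ψ e H) (Φ : Matrix ι κ ℝ)
    (heΦ : ∀ c r, Φ (e c r) c = 1) (c d : κ) (h h' : R) :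
    #{i | Ψ i (c, h) ≠ 0 ∧ Ψ i (d, h') ≠ 0} ≤ #{i | Φ i c = 1 ∧ Φ i d = 1} := by
  refine card_le_card (monotone_filter_right _ fun i _ ⟨hc, hd⟩ => ⟨?_, ?_⟩)
  · obtain ⟨r, rfl⟩ := hΨ.exists_eq_of_apply_ne_zero hc
    exact heΦ c r
  · obtain ⟨r, rfl⟩ := hΨ.exists_eq_of_apply_ne_zero hd
    exact heΦ d r

theorem abs_sum_mul_le_one [Fintype ι] (hΨ : IsModulation Ψ e H) (hH : ∀ r t, |H r t| = 1)
    (Φ : Matrix ι κ ℝ) (heΦ : ∀ c r, Φ (e c r) c = 1) {c d : κ}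
    (hoverlap : #{i | Φ i c = 1 ∧ Φ i d = 1} ≤ 1) (h h' : R) :
    |∑ i, Ψ i (c, h) * Ψ i (d, h')| ≤ 1 :=
  (abs_sum_mul_le_card_support_inter (fun i => hΨ.abs_apply_le_one hH i _)
    fun i => hΨ.abs_apply_le_one hH i _).trans
    (by exact_mod_cast (hΨ.card_support_inter_le Φ heΦ c d h h').trans hoverlap)

end IsModulation

theorem ternary_hadamard_coherence_general
    (p j : ℕ)
    (Φ : Matrix (Fin (p * (p - j))) (Fin (p * p)) ℝ)
    (hoverlap : ∀ c d, c ≠ d →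
      (Finset.univ.filter fun i => Φ i c = 1 ∧ Φ i d = 1).card ≤ 1)
    (H : Matrix (Fin (p - j)) (Fin (p - j)) ℝ)
    (hH : ∀ r t, H r t = 1 ∨ H r t = -1)
    (hHorth : ∀ r s, r ≠ s → ∑ t, H r t * H s t = 0)
    (e : Fin (p * p) → Fin (p - j) → Fin (p * (p - j)))
    (he : ∀ c, Function.Injective (e c))
    (heΦ : ∀ c r, Φ (e c r) c = 1)
    (Ψ : Matrix (Fin (p * (p - j))) (Fin (p * p) × Fin (p - j)) ℝ)
    (hΨ₁ : ∀ c h r, Ψ (e c r) (c, h) = H h r)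
    (hΨ₀ : ∀ c h i, (∀ r, i ≠ e c r) → Ψ i (c, h) = 0)
    (x y : Fin (p * p) × Fin (p - j)) (hxy : x ≠ y) :
    |∑ i, Ψ i x * Ψ i y| /
      (Real.sqrt (∑ i, Ψ i x ^ 2) * Real.sqrt (∑ i, Ψ i y ^ 2)) ≤
      1 / ((p : ℝ) - j) := by
  obtain ⟨c, h⟩ := x
  obtain ⟨d, h'⟩ := y
  have hΨ : IsModulation Ψ e H := ⟨he, hΨ₁, hΨ₀⟩
  have hHabs : ∀ r t, |H r t| = 1 := fun r t => by rcases hH r t with hrt | hrt <;> simp [hrt]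
  have hinner : |∑ i, Ψ i (c, h) * Ψ i (d, h')| ≤ 1 := by
    by_cases hcd : c = d
    · subst hcd
      rw [hΨ.sum_mul_eq_zero_of_ne hHorth c fun hh => hxy (by rw [hh]), abs_zero]
      exact zero_le_one
    · exact hΨ.abs_sum_mul_le_one hHabs Φ heΦ (hoverlap c d hcd) h h'
  -- `h : Fin (p - j)` forces `j < p`, so the subtraction `p - j` in `ℕ` does not truncate.
  have hjp : j ≤ p := by have := h.pos; omega
  rw [hΨ.sum_sq hHabs, hΨ.sum_sq hHabs, Real.mul_self_sqrt (Nat.cast_nonneg _), Fintype.card_fin,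
    Nat.cast_sub hjp]
  exact div_le_div_of_nonneg_right hinner (sub_nonneg.mpr (Nat.cast_le.mpr hjp))

/-- The ternary matrix Ψ obtained by modulating the ones of each column of
the Euler-square binary matrix Φ with rows of a Hadamard matrix H has
coherence at most 1/(p−j). -/
theorem ternary_hadamard_coherence
    (p j : ℕ) (hp : p.Prime) (hj : j = 1 ∨ j = 2) (hq : 2 ≤ p - j)
    (Φ : Matrix (Fin (p * (p - j))) (Fin (p * p)) ℝ)
    (hbin : ∀ i c, Φ i c = 0 ∨ Φ i c = 1)
    (hones : ∀ c, (Finset.univ.filter fun i => Φ i c = 1).card = p - j)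
    (hoverlap : ∀ c d, c ≠ d →
      (Finset.univ.filter fun i => Φ i c = 1 ∧ Φ i d = 1).card ≤ 1)
    (H : Matrix (Fin (p - j)) (Fin (p - j)) ℝ)
    (hH : ∀ r t, H r t = 1 ∨ H r t = -1)
    (hHorth : ∀ r s, r ≠ s → ∑ t, H r t * H s t = 0)
    (e : Fin (p * p) → Fin (p - j) → Fin (p * (p - j)))
    (he : ∀ c, Function.Injective (e c))
    (heΦ : ∀ c r, Φ (e c r) c = 1)
    (heSupp : ∀ c i, Φ i c = 1 → ∃ r, i = e c r)
    (Ψ : Matrix (Fin (p * (p - j))) (Fin (p * p) × Fin (p - j)) ℝ)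
    (hΨ₁ : ∀ c h r, Ψ (e c r) (c, h) = H h r)
    (hΨ₀ : ∀ c h i, (∀ r, i ≠ e c r) → Ψ i (c, h) = 0)
    (x y : Fin (p * p) × Fin (p - j)) (hxy : x ≠ y) :
    |∑ i, Ψ i x * Ψ i y| /
      (Real.sqrt (∑ i, Ψ i x ^ 2) * Real.sqrt (∑ i, Ψ i y ^ 2)) ≤
      1 / ((p : ℝ) - j) :=
  ternary_hadamard_coherence_general p j Φ hoverlap H hH hHorth e he heΦ Ψ hΨ₁ hΨ₀ x y hxy
end
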